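/- Let N be a positive integer and let a₁, …, a_m : ZMod N → ℂ be filters whose discrete Fourier transforms satisfy ∑_{i=1}^m |â_i(k)|² = 1 for every frequency k ∈ ZMod N. Then for all x, y : ZMod N → ℂ: ∑_{t ∈ ZMod N} x(t) · conj(y(t)) = ∑_{i=1}^m ∑_{t ∈ ZMod N} (a_i ⋆ x)(t) · conj((a_i ⋆ y)(t)). That is, a filter bank whose squared gain functions sum to one at every discrete frequency exactly preserves cross-products (realized covariance equals the sum over filter outputs of the filtered cross-products). -/

import Mathlib

open Complex Finset

/-- The discrete Fourier transform `â(k) = ∑_t a(t) e^{−2πi k t / N}`. -/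
noncomputable def dft {N : ℕ} [NeZero N] (a : ZMod N → ℂ) (k : ZMod N) : ℂ :=
  ∑ t : ZMod N, a t * Complex.exp (-(2 * (Real.pi : ℂ) * k.val * t.val / N) * Complex.I)

/-- Circular convolution `(a ⋆ x)(t) = ∑_s a(s) x(t − s)`. -/
noncomputable def cconv {N : ℕ} [NeZero N] (a x : ZMod N → ℂ) (t : ZMod N) : ℂ :=
  ∑ s : ZMod N, a s * x (t - s)

/-!
Everything is computed on the Fourier side. By Parseval, `N` times a cross-product
`∑ₜ f t · conj (g t)` equals `∑ₖ f̂ k · conj (ĝ k)`, and by the convolution theorem filtering by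
`aᵢ` multiplies the transform by `âᵢ`. Hence `N` times the right-hand side is
`∑ₖ (∑ᵢ ‖âᵢ k‖²) · x̂ k · conj (ŷ k)`, and the gain condition collapses the inner sum to `1`.
-/

open scoped ZMod ComplexConjugate

section

variable {N : ℕ} [NeZero N]

lemma dft_eq_zmod_dft (Φ : ZMod N → ℂ) : dft Φ = 𝓕 Φ := by
  ext k
  refine sum_congr rfl fun t _ => ?_
  have h : (-(t * k) : ZMod N) = ((-(k.val * t.val : ℤ) : ℤ) : ZMod N) := by
    push_cast [ZMod.natCast_val, ZMod.intCast_zmod_cast]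
    simp [mul_comm]
  rw [smul_eq_mul, mul_comm, h, ZMod.stdAddChar_coe]
  congr 2
  push_cast
  ring

lemma ZMod.conj_stdAddChar (u : ZMod N) :
    conj (ZMod.stdAddChar u) = ZMod.stdAddChar (-u) := by
  rw [ZMod.stdAddChar_apply, ZMod.stdAddChar_apply, AddChar.map_neg_eq_inv, Circle.coe_inv_eq_conj]

lemma ZMod.conj_dft_apply (Φ : ZMod N → ℂ) (k : ZMod N) :
    conj (𝓕 Φ k) = ∑ t, ZMod.stdAddChar (t * k) * conj (Φ t) := by
  simp only [ZMod.dft_apply, map_sum, smul_eq_mul, map_mul, ZMod.conj_stdAddChar, neg_neg]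

lemma ZMod.sum_dft_mul_conj_dft (Φ Ψ : ZMod N → ℂ) :
    ∑ k, 𝓕 Φ k * conj (𝓕 Ψ k) = N * ∑ t, Φ t * conj (Ψ t) := by
  calc ∑ k, 𝓕 Φ k * conj (𝓕 Ψ k)
      = ∑ t, conj (Ψ t) * 𝓕 (𝓕 Φ) (-t) := by
        simp only [ZMod.conj_dft_apply, ZMod.dft_apply (𝓕 Φ), mul_sum, smul_eq_mul, mul_neg,
          neg_neg]
        rw [sum_comm]
        exact sum_congr rfl fun t _ => sum_congr rfl fun k _ => by rw [mul_comm t k]; ring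
    _ = N * ∑ t, Φ t * conj (Ψ t) := by
        simp only [ZMod.dft_dft, neg_neg, smul_eq_mul, mul_sum]
        exact sum_congr rfl fun t _ => by ring

lemma ZMod.dft_cconv (Φ Ψ : ZMod N → ℂ) (k : ZMod N) :
    𝓕 (cconv Φ Ψ) k = 𝓕 Φ k * 𝓕 Ψ k := by
  simp only [ZMod.dft_apply, cconv, smul_eq_mul, mul_sum, sum_mul]
  rw [sum_comm]
  conv_rhs => rw [sum_comm]
  refine sum_congr rfl fun s _ => ?_
  rw [← Equiv.sum_comp (Equiv.addRight s)]
  refine sum_congr rfl fun u _ => ?_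
  simp only [Equiv.coe_addRight, add_sub_cancel_right, add_mul, neg_add, AddChar.map_add_eq_mul]
  ring

lemma sum_cconv_mul_conj_cconv (a x y : ZMod N → ℂ) :
    N * ∑ t, cconv a x t * conj (cconv a y t) =
      ∑ k, (‖𝓕 a k‖ : ℂ) ^ 2 * (𝓕 x k * conj (𝓕 y k)) := by
  rw [← ZMod.sum_dft_mul_conj_dft]
  refine sum_congr rfl fun k _ => ?_
  rw [ZMod.dft_cconv, ZMod.dft_cconv, map_mul, ← mul_conj']
  ring

end

/-- A filter bank whose squared gain functions sum to one at every discrete frequency exactly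
preserves cross-products: the realized covariance equals the sum over the filter outputs of
the filtered cross-products. -/
theorem filter_bank_preserves_cross_products (N : ℕ) [NeZero N] (m : ℕ)
    (a : Fin m → ZMod N → ℂ)
    (hgain : ∀ k : ZMod N, ∑ i : Fin m, ‖dft (a i) k‖ ^ 2 = 1)
    (x y : ZMod N → ℂ) :
    (∑ t : ZMod N, x t * (starRingEnd ℂ) (y t))
      = ∑ i : Fin m, ∑ t : ZMod N, cconv (a i) x t * (starRingEnd ℂ) (cconv (a i) y t) := by
  simp only [dft_eq_zmod_dft] at hgain
  have hgain_cast (k : ZMod N) : ∑ i, (‖𝓕 (a i) k‖ : ℂ) ^ 2 = 1 := by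
    exact_mod_cast hgain k
  apply mul_left_cancel₀ (NeZero.ne (N : ℂ))
  calc N * ∑ t, x t * conj (y t)
      = ∑ k, 𝓕 x k * conj (𝓕 y k) := (ZMod.sum_dft_mul_conj_dft x y).symm
    _ = ∑ k, ∑ i, (‖𝓕 (a i) k‖ : ℂ) ^ 2 * (𝓕 x k * conj (𝓕 y k)) := by
        simp only [← sum_mul, hgain_cast, one_mul]
    _ = ∑ i, N * ∑ t, cconv (a i) x t * conj (cconv (a i) y t) := by
        rw [sum_comm]
        simp only [sum_cconv_mul_conj_cconv]
    _ = N * ∑ i, ∑ t, cconv (a i) x t * conj (cconv (a i) y t) := (mul_sum ..).symm
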